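/- arXiv:1805.11989 — 2 statements merged into one kernel-verified Lean document; each statement's English description precedes it below -/
import Mathlib

section
/- There exists a constant C > 0 such that for every integer k ≥ 1 and all reals t > 0 and B > 0, the Lebesgue measure (in ℝ^{2k}) of the set E_k^{(t,B)} of k-tuples ((t_1,x_1),…,(t_k,x_k)) ∈ ([0,t]×ℝ)^k with 0 < t_1 < … < t_k < t and Ent((t_ℓ,x_ℓ)_{1≤ℓ≤k}) ≤ B is at most (C · B^{1/2} · t^{3/2} / k²)^k. -/
open MeasureTheory ProbabilityTheory Real Filter
open scoped ENNReal NNReal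

noncomputable section

/-- The point preceding index `i` in the sequence `p`, with the convention that the
point preceding the first one is the origin `(0,0)`. -/
def prevPt {k : ℕ} (p : Fin k → ℝ × ℝ) (i : Fin k) : ℝ × ℝ :=
  if (i : ℕ) = 0 then (0, 0)
  else p ⟨(i : ℕ) - 1, lt_of_le_of_lt (Nat.sub_le _ _) i.isLt⟩

/-- The entropy `Ent(Δ) = (1/2) ∑_{i=1}^k (x_i - x_{i-1})² / (t_i - t_{i-1})` of a finite
sequence of points `Δ = ((t_1,x_1),…,(t_k,x_k))`, with the convention `(t_0,x_0) = (0,0)`. -/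
def entSeq {k : ℕ} (p : Fin k → ℝ × ℝ) : ℝ :=
  (1 / 2) * ∑ i : Fin k, ((p i).2 - (prevPt p i).2) ^ 2 / ((p i).1 - (prevPt p i).1)

/-- The set `E_k^{(t,B)}` of `k`-tuples of points of `[0,t] × ℝ` with strictly increasing
positive time coordinates, all below `t`, and entropy at most `B`. -/
def Ekt (k : ℕ) (t B : ℝ) : Set (Fin k → ℝ × ℝ) :=
  {p | StrictMono (fun i => (p i).1) ∧ (∀ i, 0 < (p i).1 ∧ (p i).1 < t) ∧ entSeq p ≤ B}

/-! ### Auxiliary definitions -/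

/-- Previous value of a real sequence, with convention value `0` before index `0`. -/
def prev0 {k : ℕ} (X : Fin k → ℝ) (i : Fin k) : ℝ :=
  if (i : ℕ) = 0 then 0
  else X ⟨(i : ℕ) - 1, lt_of_le_of_lt (Nat.sub_le _ _) i.isLt⟩

lemma entSeq_eq {k : ℕ} (p : Fin k → ℝ × ℝ) :
    entSeq p = (1 / 2) * ∑ i : Fin k,
      ((p i).2 - prev0 (fun j => (p j).2) i) ^ 2 / ((p i).1 - prev0 (fun j => (p j).1) i) := by
  unfold entSeq prevPt prev0
  congr 1
  refine Finset.sum_congr rfl fun i _ => ?_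
  by_cases h : (i : ℕ) = 0 <;> simp [h]

lemma measurable_prev0 {k : ℕ} (i : Fin k) : Measurable (fun X : Fin k → ℝ => prev0 X i) := by
  unfold prev0
  split
  · exact measurable_const
  · exact measurable_pi_apply _

/-- Telescoping sum. -/
lemma sum_sub_prev0 {k : ℕ} (hk : 1 ≤ k) (T : Fin k → ℝ) :
    ∑ i : Fin k, (T i - prev0 T i) = T ⟨k - 1, by omega⟩ := by
  classical
  set g : ℕ → ℝ := fun j => if h : 0 < j ∧ j ≤ k then T ⟨j - 1, by omega⟩ else 0 with hg
  have h1 : ∀ i : Fin k, T i - prev0 T i = g ((i : ℕ) + 1) - g (i : ℕ) := by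
    intro i
    have hg1 : g ((i : ℕ) + 1) = T i := by
      simp only [hg]
      rw [dif_pos ⟨Nat.succ_pos _, i.isLt⟩]
      exact congrArg T (Fin.ext (by simp))
    have hg2 : g (i : ℕ) = prev0 T i := by
      simp only [hg]
      unfold prev0
      by_cases h : (i : ℕ) = 0
      · rw [dif_neg (by omega), if_pos h]
      · rw [dif_pos ⟨Nat.pos_of_ne_zero h, le_of_lt i.isLt⟩, if_neg h]
    rw [hg1, hg2]
  calc ∑ i : Fin k, (T i - prev0 T i) = ∑ i : Fin k, (g ((i : ℕ) + 1) - g (i : ℕ)) :=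
        Finset.sum_congr rfl fun i _ => h1 i
    _ = ∑ j ∈ Finset.range k, (g (j + 1) - g j) :=
        Fin.sum_univ_eq_sum_range (fun j => g (j + 1) - g j) k
    _ = g k - g 0 := Finset.sum_range_sub g k
    _ = T ⟨k - 1, by omega⟩ := by
        simp only [hg]
        rw [dif_pos ⟨by omega, le_rfl⟩, dif_neg (by omega)]
        ring

/-! ### The difference linear map and its determinant -/

def diffMap (k : ℕ) : (Fin k → ℝ) →ₗ[ℝ] (Fin k → ℝ) :=
  LinearMap.pi (fun i : Fin k =>
    if (i : ℕ) = 0 then (LinearMap.proj i : (Fin k → ℝ) →ₗ[ℝ] ℝ)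
    else (LinearMap.proj i : (Fin k → ℝ) →ₗ[ℝ] ℝ) -
      (LinearMap.proj (⟨(i : ℕ) - 1, lt_of_le_of_lt (Nat.sub_le _ _) i.isLt⟩ : Fin k) :
        (Fin k → ℝ) →ₗ[ℝ] ℝ))

lemma diffMap_apply {k : ℕ} (X : Fin k → ℝ) (i : Fin k) :
    diffMap k X i = X i - prev0 X i := by
  unfold diffMap prev0
  simp only [LinearMap.pi_apply]
  by_cases h : (i : ℕ) = 0
  · rw [if_pos h, if_pos h, LinearMap.proj_apply, sub_zero]
  · rw [if_neg h, if_neg h, LinearMap.sub_apply, LinearMap.proj_apply, LinearMap.proj_apply]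

lemma diffMap_det (k : ℕ) : LinearMap.det (diffMap k) = 1 := by
  classical
  rw [← LinearMap.det_toMatrix' (diffMap k)]
  rw [Matrix.det_of_lowerTriangular]
  · refine Finset.prod_eq_one fun i _ => ?_
    rw [LinearMap.toMatrix'_apply, diffMap_apply]
    unfold prev0
    by_cases h : (i : ℕ) = 0
    · simp [h]
    · have hne : (⟨(i : ℕ) - 1, lt_of_le_of_lt (Nat.sub_le _ _) i.isLt⟩ : Fin k) ≠ i := by
        intro hc
        have := congrArg Fin.val hc
        simp at this
        omega
      simp [h, hne]
  · intro i j hij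
    have hij' : (i : Fin k) < j := hij
    rw [LinearMap.toMatrix'_apply, diffMap_apply]
    unfold prev0
    have h1 : i ≠ j := ne_of_lt hij'
    by_cases h : (i : ℕ) = 0
    · simp [h, h1]
    · have hne : (⟨(i : ℕ) - 1, lt_of_le_of_lt (Nat.sub_le _ _) i.isLt⟩ : Fin k) ≠ j := by
        intro hc
        have := congrArg Fin.val hc
        simp only at this
        have hlt : (i : ℕ) < (j : ℕ) := hij'
        omega
      simp [h, h1, hne]

/-! ### Volume of the ℓ¹ ball -/

lemma volume_l1ball (k : ℕ) (hk : 1 ≤ k) (r : ℝ) :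
    volume {x : Fin k → ℝ | ∑ i, |x i| ≤ r}
      = ENNReal.ofReal r ^ k * ENNReal.ofReal (2 ^ k / (Nat.factorial k : ℝ)) := by
  haveI : Nonempty (Fin k) := Fin.pos_iff_nonempty.mp (by omega)
  have h := MeasureTheory.volume_sum_rpow_le (Fin k) (p := 1) le_rfl r
  have hset : {x : Fin k → ℝ | (∑ i, |x i| ^ (1 : ℝ)) ^ (1 / (1 : ℝ)) ≤ r}
      = {x : Fin k → ℝ | ∑ i, |x i| ≤ r} := by
    ext x
    simp [Real.rpow_one]
  rw [hset] at h
  rw [h, Fintype.card_fin]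
  congr 2
  have h2 : (1 : ℝ) / 1 + 1 = 2 := by norm_num
  rw [h2, Real.Gamma_two]
  have h3 : ((k : ℝ) / 1 + 1) = ((k : ℝ) + 1) := by norm_num
  rw [h3, Real.Gamma_nat_eq_factorial]
  norm_num

lemma measurable_l1diff {k : ℕ} (r : ℝ) :
    MeasurableSet {x : Fin k → ℝ | ∑ i, |x i - prev0 x i| ≤ r} := by
  refine measurableSet_le (Finset.measurable_sum _ fun i _ => ?_) measurable_const
  exact ((measurable_pi_apply i).sub (measurable_prev0 i)).abs

lemma volume_l1diff (k : ℕ) (hk : 1 ≤ k) (r : ℝ) :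
    volume {x : Fin k → ℝ | ∑ i, |x i - prev0 x i| ≤ r}
      = ENNReal.ofReal r ^ k * ENNReal.ofReal (2 ^ k / (Nat.factorial k : ℝ)) := by
  have hset : {x : Fin k → ℝ | ∑ i, |x i - prev0 x i| ≤ r}
      = (diffMap k) ⁻¹' {y : Fin k → ℝ | ∑ i, |y i| ≤ r} := by
    ext x
    simp [diffMap_apply]
  rw [hset, MeasureTheory.Measure.addHaar_preimage_linearMap volume
    (by rw [diffMap_det]; norm_num), diffMap_det, volume_l1ball k hk r]
  simp

/-! ### Volume of the simplex -/

def simplexSet (k : ℕ) (t : ℝ) : Set (Fin k → ℝ) :=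
  {T | StrictMono T ∧ ∀ i, 0 < T i ∧ T i < t}

lemma measurableSet_mono_perm (k : ℕ) (t : ℝ) (σ : Equiv.Perm (Fin k)) :
    MeasurableSet {T : Fin k → ℝ | StrictMono (T ∘ σ) ∧ ∀ i, 0 < T i ∧ T i < t} := by
  have heq : {T : Fin k → ℝ | StrictMono (T ∘ σ) ∧ ∀ i, 0 < T i ∧ T i < t}
      = (⋂ (i) (j) (_ : i < j), {T : Fin k → ℝ | T (σ i) < T (σ j)})
        ∩ ⋂ i, ({T : Fin k → ℝ | 0 < T i} ∩ {T | T i < t}) := by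
    ext T
    simp only [Set.mem_inter_iff, Set.mem_iInter, Set.mem_setOf_eq, Set.mem_sep_iff]
    constructor
    · rintro ⟨h1, h2⟩
      exact ⟨fun i j hij => h1 hij, fun i => h2 i⟩
    · rintro ⟨h1, h2⟩
      exact ⟨fun i j hij => h1 i j hij, fun i => h2 i⟩
  rw [heq]
  refine MeasurableSet.inter ?_ ?_
  · exact MeasurableSet.iInter fun i => MeasurableSet.iInter fun j =>
      MeasurableSet.iInter fun _ =>
        measurableSet_lt (measurable_pi_apply _) (measurable_pi_apply _)
  · exact MeasurableSet.iInter fun i =>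
      (measurableSet_lt measurable_const (measurable_pi_apply _)).inter
        (measurableSet_lt (measurable_pi_apply _) measurable_const)

lemma measurableSet_simplexSet (k : ℕ) (t : ℝ) : MeasurableSet (simplexSet k t) := by
  have := measurableSet_mono_perm k t (Equiv.refl (Fin k))
  simpa [simplexSet] using this

lemma vol_perm (k : ℕ) (t : ℝ) (σ : Equiv.Perm (Fin k)) :
    volume {T : Fin k → ℝ | StrictMono (T ∘ σ) ∧ ∀ i, 0 < T i ∧ T i < t}
      = volume (simplexSet k t) := by
  have hmp := MeasureTheory.volume_measurePreserving_piCongrLeft (fun _ : Fin k => ℝ) σ.symm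
  have happ : ∀ (T : Fin k → ℝ) (i : Fin k),
      (MeasurableEquiv.piCongrLeft (fun _ : Fin k => ℝ) σ.symm) T i = T (σ i) := by
    intro T i
    have := MeasurableEquiv.piCongrLeft_apply_apply σ.symm (β := fun _ : Fin k => ℝ) T (σ i)
    simpa using this
  have hpre : {T : Fin k → ℝ | StrictMono (T ∘ σ) ∧ ∀ i, 0 < T i ∧ T i < t}
      = (MeasurableEquiv.piCongrLeft (fun _ : Fin k => ℝ) σ.symm) ⁻¹' simplexSet k t := by
    ext T
    simp only [Set.mem_preimage, simplexSet, Set.mem_setOf_eq]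
    constructor
    · rintro ⟨h1, h2⟩
      constructor
      · intro a b hab
        rw [happ, happ]
        exact h1 hab
      · intro i
        rw [happ]
        exact h2 _
    · rintro ⟨h1, h2⟩
      constructor
      · intro a b hab
        have := @h1 a b hab
        rwa [happ, happ] at this
      · intro i
        have := h2 (σ.symm i)
        rwa [happ, Equiv.apply_symm_apply] at this
  rw [hpre, hmp.measure_preimage (measurableSet_simplexSet k t).nullMeasurableSet]

lemma vol_simplex_le (k : ℕ) (t : ℝ) (ht : 0 < t) :
    (Nat.factorial k : ℝ≥0∞) * volume (simplexSet k t) ≤ ENNReal.ofReal t ^ k := by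
  classical
  set S : Equiv.Perm (Fin k) → Set (Fin k → ℝ) :=
    fun σ => {T | StrictMono (T ∘ σ) ∧ ∀ i, 0 < T i ∧ T i < t} with hS
  have hdisj : Pairwise (Function.onFun Disjoint S) := by
    intro σ τ hne
    rw [Function.onFun, Set.disjoint_left]
    intro T hσ hτ
    apply hne
    have hτm : StrictMono (T ∘ τ) := hτ.1
    have hσm : StrictMono (T ∘ σ) := hσ.1
    have hρ : StrictMono (⇑(τ⁻¹ * σ)) := by
      intro a b hab
      have h1 : (T ∘ σ) a < (T ∘ σ) b := hσm hab
      have h2 : (T ∘ τ) ((τ⁻¹ * σ) a) = (T ∘ σ) a := by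
        simp [Function.comp, Equiv.Perm.mul_apply]
      have h3 : (T ∘ τ) ((τ⁻¹ * σ) b) = (T ∘ σ) b := by
        simp [Function.comp, Equiv.Perm.mul_apply]
      have := h2 ▸ h3 ▸ h1
      exact hτm.lt_iff_lt.mp this
    have hid : ⇑(τ⁻¹ * σ) = id := by
      haveI : WellFoundedLT (Fin k) := inferInstance
      refine (hρ.range_inj (strictMono_id (α := Fin k))).1 ?_
      rw [Set.range_id, Equiv.range_eq_univ]
    have : τ⁻¹ * σ = 1 := Equiv.ext fun x => congrFun hid x
    have := mul_eq_one_iff_inv_eq.mp this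
    simp at this
    exact this.symm
  have hmeas : ∀ σ, MeasurableSet (S σ) := fun σ => measurableSet_mono_perm k t σ
  have hcube : (⋃ σ, S σ) ⊆ Set.univ.pi fun _ : Fin k => Set.Ioo 0 t := by
    rintro T hT
    obtain ⟨σ, hσ⟩ := Set.mem_iUnion.mp hT
    intro i _
    exact ⟨(hσ.2 i).1, (hσ.2 i).2⟩
  have hvol : volume (⋃ σ, S σ) = (Nat.factorial k : ℝ≥0∞) * volume (simplexSet k t) := by
    rw [measure_iUnion hdisj hmeas, tsum_fintype]
    have : ∀ σ : Equiv.Perm (Fin k), volume (S σ) = volume (simplexSet k t) :=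
      fun σ => vol_perm k t σ
    simp_rw [this]
    rw [Finset.sum_const, Finset.card_univ, Fintype.card_perm, Fintype.card_fin]
    rw [nsmul_eq_mul]
  calc (Nat.factorial k : ℝ≥0∞) * volume (simplexSet k t) = volume (⋃ σ, S σ) := hvol.symm
    _ ≤ volume (Set.univ.pi fun _ : Fin k => Set.Ioo 0 t) := measure_mono hcube
    _ = ENNReal.ofReal t ^ k := by
        rw [volume_pi_pi]
        simp [Real.volume_Ioo]

/-! ### Cauchy–Schwarz step -/

lemma cs_step (k : ℕ) (hk : 1 ≤ k) (t B : ℝ) (ht : 0 < t) (hB : 0 < B)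
    (T X : Fin k → ℝ) (hT : T ∈ simplexSet k t)
    (hent : (1 / 2) * (∑ i : Fin k, (X i - prev0 X i) ^ 2 / (T i - prev0 T i)) ≤ B) :
    ∑ i : Fin k, |X i - prev0 X i| ≤ Real.sqrt (2 * B * t) := by
  obtain ⟨hmono, hrange⟩ := hT
  set dT : Fin k → ℝ := fun i => T i - prev0 T i with hdT
  set dX : Fin k → ℝ := fun i => X i - prev0 X i with hdX
  have hdTpos : ∀ i, 0 < dT i := by
    intro i
    show 0 < T i - prev0 T i
    unfold prev0
    by_cases h : (i : ℕ) = 0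
    · rw [if_pos h]
      simpa using (hrange i).1
    · rw [if_neg h]
      have hlt : (⟨(i : ℕ) - 1, lt_of_le_of_lt (Nat.sub_le _ _) i.isLt⟩ : Fin k) < i := by
        rw [Fin.lt_def]
        simp only
        omega
      have := hmono hlt
      linarith
  have hsumdT : ∑ i, dT i ≤ t := by
    show ∑ i : Fin k, (T i - prev0 T i) ≤ t
    rw [sum_sub_prev0 hk T]
    exact le_of_lt (hrange _).2
  have hent2 : ∑ i, dX i ^ 2 / dT i ≤ 2 * B := by
    show ∑ i : Fin k, (X i - prev0 X i) ^ 2 / (T i - prev0 T i) ≤ 2 * B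
    linarith
  have hCS : (∑ i, |dX i|) ^ 2 ≤ (∑ i, dX i ^ 2 / dT i) * (∑ i, dT i) := by
    have h := Finset.sum_mul_sq_le_sq_mul_sq Finset.univ
      (fun i => |dX i| / Real.sqrt (dT i)) (fun i => Real.sqrt (dT i))
    have h1 : ∀ i : Fin k, |dX i| / Real.sqrt (dT i) * Real.sqrt (dT i) = |dX i| := by
      intro i
      exact div_mul_cancel₀ _ (ne_of_gt (Real.sqrt_pos.mpr (hdTpos i)))
    have h2 : ∀ i : Fin k, (|dX i| / Real.sqrt (dT i)) ^ 2 = dX i ^ 2 / dT i := by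
      intro i
      rw [div_pow, sq_abs, Real.sq_sqrt (hdTpos i).le]
    have h3 : ∀ i : Fin k, Real.sqrt (dT i) ^ 2 = dT i := fun i => Real.sq_sqrt (hdTpos i).le
    calc (∑ i, |dX i|) ^ 2
        = (∑ i, |dX i| / Real.sqrt (dT i) * Real.sqrt (dT i)) ^ 2 := by
          congr 1; exact (Finset.sum_congr rfl fun i _ => (h1 i)).symm
      _ ≤ (∑ i, (|dX i| / Real.sqrt (dT i)) ^ 2) * (∑ i, Real.sqrt (dT i) ^ 2) := h
      _ = (∑ i, dX i ^ 2 / dT i) * (∑ i, dT i) := by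
          congr 1
          · exact Finset.sum_congr rfl fun i _ => h2 i
          · exact Finset.sum_congr rfl fun i _ => h3 i
  have hsum_nonneg : 0 ≤ ∑ i, |dX i| := Finset.sum_nonneg fun i _ => abs_nonneg _
  rw [Real.le_sqrt hsum_nonneg (by positivity)]
  calc (∑ i, |dX i|) ^ 2 ≤ (∑ i, dX i ^ 2 / dT i) * (∑ i, dT i) := hCS
    _ ≤ (2 * B) * t := by
        apply mul_le_mul hent2 hsumdT (Finset.sum_nonneg fun i _ => (hdTpos i).le)
        positivity

/-! ### The real arithmetic -/

lemma pow_le_exp_mul_factorial (k : ℕ) : (k : ℝ) ^ k ≤ Real.exp 1 ^ k * Nat.factorial k := by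
  have hx : (0 : ℝ) ≤ (k : ℝ) := Nat.cast_nonneg k
  have h1 : (k : ℝ) ^ k / (Nat.factorial k : ℝ) ≤ Real.exp k := by
    have h2 := Real.sum_le_exp_of_nonneg hx (k + 1)
    refine le_trans ?_ h2
    have hmem : k ∈ Finset.range (k + 1) := Finset.self_mem_range_succ k
    exact Finset.single_le_sum (f := fun i => (k : ℝ) ^ i / (Nat.factorial i : ℝ))
      (fun i _ => by positivity) hmem
  have hfac : (0 : ℝ) < (Nat.factorial k : ℝ) := by positivity
  rw [div_le_iff₀ hfac] at h1
  calc (k : ℝ) ^ k ≤ Real.exp k * Nat.factorial k := h1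
    _ = Real.exp 1 ^ k * Nat.factorial k := by rw [← Real.exp_one_pow]

lemma final_real (k : ℕ) (hk : 1 ≤ k) (t B : ℝ) (ht : 0 < t) (hB : 0 < B) :
    t ^ k / (Nat.factorial k : ℝ) * ((Real.sqrt (2 * B * t)) ^ k
        * (2 ^ k / (Nat.factorial k : ℝ)))
      ≤ (2 * Real.sqrt 2 * Real.exp 2 * B ^ ((1 : ℝ) / 2) * t ^ ((3 : ℝ) / 2) / (k : ℝ) ^ 2) ^ k := by
  have hkpos : (0 : ℝ) < (k : ℝ) := by exact_mod_cast Nat.pos_of_ne_zero (by omega)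
  have hfacpos : (0 : ℝ) < (Nat.factorial k : ℝ) := by positivity
  set a : ℝ := 2 * Real.sqrt (2 * B * t) * t with ha
  have ha0 : 0 ≤ a := by positivity
  have hB12 : B ^ ((1 : ℝ) / 2) = Real.sqrt B := (Real.sqrt_eq_rpow B).symm
  have ht32 : t ^ ((3 : ℝ) / 2) = t * Real.sqrt t := by
    rw [show (3 : ℝ) / 2 = 1 + 1 / 2 by norm_num, Real.rpow_add ht, Real.rpow_one,
      ← Real.sqrt_eq_rpow]
  have hsqrt : Real.sqrt (2 * B * t) = Real.sqrt 2 * Real.sqrt B * Real.sqrt t := by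
    rw [Real.sqrt_mul (by positivity), Real.sqrt_mul (by norm_num)]
  have hbase : 2 * Real.sqrt 2 * Real.exp 2 * B ^ ((1 : ℝ) / 2) * t ^ ((3 : ℝ) / 2) / (k : ℝ) ^ 2
      = a * (Real.exp 1 ^ 2 / (k : ℝ) ^ 2) := by
    have he2 : Real.exp 2 = Real.exp 1 ^ 2 := by
      rw [sq, ← Real.exp_add]
      norm_num
    rw [hB12, ht32, ha, hsqrt, he2]
    field_simp
  have hLHS : t ^ k / (Nat.factorial k : ℝ) * ((Real.sqrt (2 * B * t)) ^ k
      * (2 ^ k / (Nat.factorial k : ℝ))) = a ^ k / ((Nat.factorial k : ℝ)) ^ 2 := by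
    rw [ha, mul_pow, mul_pow]
    field_simp
  rw [hbase, hLHS]
  have hkey : 1 ≤ (Real.exp 1 ^ 2 / (k : ℝ) ^ 2) ^ k * ((Nat.factorial k : ℝ)) ^ 2 := by
    have h1 : (Real.exp 1 ^ 2 / (k : ℝ) ^ 2) ^ k * ((Nat.factorial k : ℝ)) ^ 2
        = ((Real.exp 1 / (k : ℝ)) ^ k * (Nat.factorial k : ℝ)) ^ 2 := by
      rw [div_pow, div_pow, ← pow_mul, ← pow_mul, mul_comm 2 k, pow_mul, pow_mul]
      ring
    rw [h1]
    have h2 : 1 ≤ (Real.exp 1 / (k : ℝ)) ^ k * (Nat.factorial k : ℝ) := by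
      rw [div_pow]
      rw [div_mul_eq_mul_div, le_div_iff₀ (by positivity), one_mul]
      exact pow_le_exp_mul_factorial k
    nlinarith [h2]
  calc a ^ k / ((Nat.factorial k : ℝ)) ^ 2
      = a ^ k * (1 / ((Nat.factorial k : ℝ)) ^ 2) := by ring
    _ ≤ a ^ k * (Real.exp 1 ^ 2 / (k : ℝ) ^ 2) ^ k := by
        refine mul_le_mul_of_nonneg_left ?_ (pow_nonneg ha0 k)
        rw [div_le_iff₀ (by positivity)]
        exact hkey
    _ = (a * (Real.exp 1 ^ 2 / (k : ℝ) ^ 2)) ^ k := (mul_pow a _ k).symm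

theorem stmt1 :
    ∃ C : ℝ, 0 < C ∧ ∀ (k : ℕ), 1 ≤ k → ∀ (t B : ℝ), 0 < t → 0 < B →
      volume (Ekt k t B)
        ≤ ENNReal.ofReal
            ((C * B ^ ((1 : ℝ) / 2) * t ^ ((3 : ℝ) / 2) / (k : ℝ) ^ 2) ^ k) := by
  refine ⟨2 * Real.sqrt 2 * Real.exp 2, by positivity, ?_⟩
  intro k hk t B ht hB
  set r : ℝ := Real.sqrt (2 * B * t) with hr
  have hr0 : 0 ≤ r := Real.sqrt_nonneg _
  set e := MeasurableEquiv.arrowProdEquivProdArrow ℝ ℝ (Fin k) with he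
  set L1 : Set (Fin k → ℝ) := {x | ∑ i, |x i - prev0 x i| ≤ r} with hL1
  have hsub : Ekt k t B ⊆ e ⁻¹' (simplexSet k t ×ˢ L1) := by
    intro p hp
    obtain ⟨h1, h2, h3⟩ := hp
    have hTmem : (fun i => (p i).1) ∈ simplexSet k t := ⟨h1, h2⟩
    have hXmem : (fun i => (p i).2) ∈ L1 := by
      rw [hL1]
      refine cs_step k hk t B ht hB (fun i => (p i).1) (fun i => (p i).2) hTmem ?_
      rw [← entSeq_eq p] at *
      exact h3
    exact Set.mem_preimage.mpr (Set.mem_prod.mpr ⟨hTmem, hXmem⟩)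
  have hmeasL1 : MeasurableSet L1 := measurable_l1diff r
  have hmeas : MeasurableSet (simplexSet k t ×ˢ L1) :=
    (measurableSet_simplexSet k t).prod hmeasL1
  have h1 : volume (Ekt k t B) ≤ volume (e ⁻¹' (simplexSet k t ×ˢ L1)) := measure_mono hsub
  have h2 : volume (e ⁻¹' (simplexSet k t ×ˢ L1))
      = (volume.prod volume) (simplexSet k t ×ˢ L1) :=
    (MeasureTheory.volume_measurePreserving_arrowProdEquivProdArrow ℝ ℝ (Fin k)).measure_preimage
      hmeas.nullMeasurableSet
  rw [h2, MeasureTheory.Measure.prod_prod] at h1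
  have hsimp : volume (simplexSet k t) ≤ ENNReal.ofReal (t ^ k / (Nat.factorial k : ℝ)) := by
    have h := vol_simplex_le k t ht
    have hne : (Nat.factorial k : ℝ≥0∞) ≠ 0 := by
      simp [Nat.factorial_ne_zero]
    have hnetop : (Nat.factorial k : ℝ≥0∞) ≠ ⊤ := ENNReal.natCast_ne_top _
    rw [mul_comm] at h
    rw [← ENNReal.le_div_iff_mul_le (Or.inl hne) (Or.inl hnetop)] at h
    refine h.trans (le_of_eq ?_)
    rw [ENNReal.ofReal_div_of_pos (by positivity), ← ENNReal.ofReal_natCast,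
      ENNReal.ofReal_pow ht.le]
  have hL1vol : volume L1 = ENNReal.ofReal r ^ k * ENNReal.ofReal (2 ^ k / (Nat.factorial k : ℝ)) :=
    volume_l1diff k hk r
  calc volume (Ekt k t B)
      ≤ volume (simplexSet k t) * volume L1 := h1
    _ ≤ ENNReal.ofReal (t ^ k / (Nat.factorial k : ℝ))
        * (ENNReal.ofReal r ^ k * ENNReal.ofReal (2 ^ k / (Nat.factorial k : ℝ))) := by
        rw [hL1vol]
        exact mul_le_mul_left hsimp _
    _ = ENNReal.ofReal (t ^ k / (Nat.factorial k : ℝ)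
        * (r ^ k * (2 ^ k / (Nat.factorial k : ℝ)))) := by
        rw [← ENNReal.ofReal_pow hr0, ← ENNReal.ofReal_mul (by positivity),
          ← ENNReal.ofReal_mul (by positivity)]
    _ ≤ ENNReal.ofReal ((2 * Real.sqrt 2 * Real.exp 2 * B ^ ((1 : ℝ) / 2) * t ^ ((3 : ℝ) / 2)
        / (k : ℝ) ^ 2) ^ k) := by
        exact ENNReal.ofReal_le_ofReal (final_real k hk t B ht hB)
end
end

section
/- There exists a constant C_0 > 0 such that for all reals t, x, B > 0, every integer m ≥ 1 and every integer k with 1 ≤ k ≤ m, one has P(𝓛_m^{(B)}(t,x) ≥ k) ≤ (C_0 · (B·t/x²)^{1/2} · m / k²)^k. -/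
/-!
If `𝓛 ≥ k`, some `k` of the points form an admissible chain, so by a union bound over the
`m ^ k` index tuples it suffices to bound the probability that `k` given independent uniform
points form one. The time increments of such a chain are positive and sum to at most `t`, and
Cauchy–Schwarz turns `Ent ≤ B` into `∑ |x_i - x_{i-1}| ≤ √(2Bt)`. Both conditions put the
increments in an `ℓ¹`-ball, and the increment map has determinant one, so the chain has
probability at most `(2t)^k / k! · (2√(2Bt))^k / k! / (2tx)^k`. Finally `k^k ≤ e^k k!` turns
`m^k / (k!)^2` into the `k^(-2k)` of the bound, with `C₀ = 2√2 e²`.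
-/

open MeasureTheory ProbabilityTheory Real Filter
open scoped ENNReal NNReal

noncomputable section

/-- The continuous entropy-controlled LPP value: the maximal cardinality of a subset of the
given points which, ordered by strictly increasing time coordinate, has entropy at most `B`. -/
def elppC (B : ℝ) {m : ℕ} (pts : Fin m → ℝ × ℝ) : ℕ :=
  sSup {k : ℕ | ∃ f : Fin k → Fin m, Function.Injective f ∧
    (∀ i, 0 < (pts (f i)).1) ∧ StrictMono (fun i => (pts (f i)).1) ∧
    entSeq (fun i => pts (f i)) ≤ B}

def prevVal {k : ℕ} (u : Fin k → ℝ) (i : Fin k) : ℝ :=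
  if (i : ℕ) = 0 then 0
  else u ⟨(i : ℕ) - 1, lt_of_le_of_lt (Nat.sub_le _ _) i.isLt⟩

def variation {k : ℕ} (u : Fin k → ℝ) : ℝ :=
  ∑ i, |u i - prevVal u i|

def admissibleSeqs (k : ℕ) (B : ℝ) : Set (Fin k → ℝ × ℝ) :=
  {p | (∀ i, 0 < (p i).1) ∧ StrictMono (fun i => (p i).1) ∧ entSeq p ≤ B}

section Increments

variable {k : ℕ}

lemma prevPt_fst (p : Fin k → ℝ × ℝ) (i : Fin k) :
    (prevPt p i).1 = prevVal (fun j => (p j).1) i := by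
  unfold prevPt prevVal; split <;> rfl

lemma prevPt_snd (p : Fin k → ℝ × ℝ) (i : Fin k) :
    (prevPt p i).2 = prevVal (fun j => (p j).2) i := by
  unfold prevPt prevVal; split <;> rfl

lemma sum_sub_prevVal (hk : 0 < k) (u : Fin k → ℝ) :
    ∑ i, (u i - prevVal u i) = u ⟨k - 1, Nat.sub_lt hk one_pos⟩ := by
  -- `F` extends `j ↦ u (j - 1)` by zero, so that `u i - prevVal u i = F (i + 1) - F i`.
  let F : ℕ → ℝ := fun j => if h : 0 < j ∧ j ≤ k then u ⟨j - 1, by omega⟩ else 0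
  have hF : ∀ i : Fin k, u i - prevVal u i = F (i + 1) - F i := by
    intro i
    have hi := i.isLt
    simp only [F, prevVal, dif_pos (show 0 < (i : ℕ) + 1 ∧ (i : ℕ) + 1 ≤ k by omega),
      Nat.add_sub_cancel]
    split_ifs <;> first | rfl | omega
  rw [Finset.sum_congr rfl fun i _ => hF i,
    Fin.sum_univ_eq_sum_range (fun j => F (j + 1) - F j), Finset.sum_range_sub]
  simp [F, hk]

lemma sub_prevVal_pos {u : Fin k → ℝ} (hpos : ∀ i, 0 < u i) (hu : StrictMono u) (i : Fin k) :
    0 < u i - prevVal u i := by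
  unfold prevVal
  split
  · simpa using hpos i
  · exact sub_pos.2 (hu (Fin.lt_def.2 (by simp; omega)))

lemma variation_nonneg (u : Fin k → ℝ) : 0 ≤ variation u :=
  Finset.sum_nonneg fun _ _ => abs_nonneg _

lemma variation_le_of_strictMono (hk : 0 < k) {u : Fin k → ℝ} {t : ℝ} (hpos : ∀ i, 0 < u i)
    (hu : StrictMono u) (ht : ∀ i, u i ≤ t) : variation u ≤ t := by
  rw [variation, Finset.sum_congr rfl fun i _ => abs_of_pos (sub_prevVal_pos hpos hu i),
    sum_sub_prevVal hk]
  exact ht _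

lemma sq_variation_snd_le {p : Fin k → ℝ × ℝ} (hpos : ∀ i, 0 < (p i).1)
    (hmono : StrictMono fun i => (p i).1) :
    variation (fun i => (p i).2) ^ 2 ≤ 2 * entSeq p * variation (fun i => (p i).1) := by
  have hs := sub_prevVal_pos hpos hmono
  have h2ent : 2 * entSeq p = ∑ i, ((p i).2 - prevVal (fun j => (p j).2) i) ^ 2 /
      ((p i).1 - prevVal (fun j => (p j).1) i) := by
    simp only [entSeq, prevPt_fst, prevPt_snd]; ring
  rw [h2ent, variation, variation]
  refine Finset.sum_sq_le_sum_mul_sum_of_sq_le_mul _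
    (fun i _ => div_nonneg (sq_nonneg _) (hs i).le) (fun i _ => abs_nonneg _) fun i _ => ?_
  rw [abs_of_pos (hs i), div_mul_cancel₀ _ (hs i).ne', sq_abs]

lemma admissibleSeqs_castLE {B : ℝ} {n : ℕ} (h : k ≤ n) {p : Fin n → ℝ × ℝ}
    (hp : p ∈ admissibleSeqs n B) : (fun i => p (Fin.castLE h i)) ∈ admissibleSeqs k B := by
  obtain ⟨hpos, hmono, hent⟩ := hp
  refine ⟨fun i => hpos _, hmono.comp (Fin.strictMono_castLE h), le_trans ?_ hent⟩
  set g : Fin n → ℝ := fun j => ((p j).2 - (prevPt p j).2) ^ 2 / ((p j).1 - (prevPt p j).1)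
  have hg : ∀ j, 0 ≤ g j := fun j =>
    div_nonneg (sq_nonneg _) (by rw [prevPt_fst]; exact (sub_prevVal_pos hpos hmono j).le)
  have hprev : ∀ i : Fin k,
      prevPt (fun j => p (Fin.castLE h j)) i = prevPt p (Fin.castLE h i) := by
    intro i
    simp only [prevPt, Fin.val_castLE]
    split <;> rfl
  calc entSeq (fun i => p (Fin.castLE h i)) = 1 / 2 * ∑ i, g (Fin.castLE h i) := by
        simp only [entSeq, hprev, g]
    _ = 1 / 2 * ∑ j ∈ Finset.univ.map (Fin.castLEEmb h), g j := by
        rw [Finset.sum_map]; rfl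
    _ ≤ 1 / 2 * ∑ j, g j := by
        gcongr ?_ * ?_
        exact Finset.sum_le_univ_sum_of_nonneg hg

end Increments

lemma exists_admissible_of_le_elppC {B : ℝ} {m k : ℕ} (hk : 0 < k) (pts : Fin m → ℝ × ℝ)
    (h : k ≤ elppC B pts) :
    ∃ f : Fin k → Fin m, (fun i => pts (f i)) ∈ admissibleSeqs k B := by
  set S := {k : ℕ | ∃ f : Fin k → Fin m, Function.Injective f ∧
    (∀ i, 0 < (pts (f i)).1) ∧ StrictMono (fun i => (pts (f i)).1) ∧
    entSeq (fun i => pts (f i)) ≤ B}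
  have hne : S.Nonempty := by
    by_contra hS
    rw [Set.not_nonempty_iff_eq_empty] at hS
    simp [elppC, S, hS] at h
    omega
  have hbdd : BddAbove S :=
    ⟨m, fun n ⟨f, hf, _⟩ => by simpa using Fintype.card_le_of_injective f hf⟩
  obtain ⟨f, -, hpos, hmono, hent⟩ := Nat.sSup_mem hne hbdd
  exact ⟨fun i => f (Fin.castLE h i),
    admissibleSeqs_castLE (n := sSup S) h ⟨hpos, hmono, hent⟩⟩

section Volume

variable {k : ℕ}

def shiftMat (k : ℕ) : Matrix (Fin k) (Fin k) ℝ :=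
  Matrix.of fun i j => if (j : ℕ) + 1 = i then 1 else 0

lemma shiftMat_mulVec (v : Fin k → ℝ) : (shiftMat k).mulVec v = prevVal v := by
  ext i
  simp only [Matrix.mulVec, dotProduct, shiftMat, Matrix.of_apply, ite_mul, one_mul, zero_mul]
  unfold prevVal
  split
  · exact Finset.sum_eq_zero fun j _ => if_neg (by omega)
  · rw [Finset.sum_eq_single ⟨(i : ℕ) - 1, by omega⟩]
    · exact if_pos (by simp; omega)
    · intro j _ hj
      exact if_neg fun h => hj (Fin.ext (by simp; omega))
    · simp

lemma det_one_sub_shiftMat : (1 - shiftMat k).det = 1 := by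
  rw [Matrix.det_of_isLowerTriangular _ fun i j (hij : i < j) => ?_]
  · simp [shiftMat]
  · have : ¬((j : ℕ) + 1 = i) := by have := Fin.lt_def.1 hij; omega
    simp [shiftMat, Matrix.one_apply_ne hij.ne, this]

lemma variation_eq_sum_abs_mulVec (v : Fin k → ℝ) :
    variation v = ∑ i, |((1 - shiftMat k).mulVec v) i| := by
  simp [variation, Matrix.sub_mulVec, shiftMat_mulVec]

lemma measurableSet_variation_le (c : ℝ) :
    MeasurableSet {v : Fin k → ℝ | variation v ≤ c} := by
  simp only [variation_eq_sum_abs_mulVec]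
  exact measurableSet_le (by fun_prop) measurable_const

lemma volume_sum_abs_le (hk : 0 < k) {c : ℝ} (hc : 0 ≤ c) :
    volume {w : Fin k → ℝ | ∑ i, |w i| ≤ c}
      = ENNReal.ofReal (c ^ k * (2 ^ k / k.factorial)) := by
  have : Nonempty (Fin k) := ⟨⟨0, hk⟩⟩
  have h := volume_sum_rpow_le (Fin k) (le_refl (1 : ℝ)) c
  simp only [Real.rpow_one, div_one, Fintype.card_fin] at h
  rw [h, ENNReal.ofReal_mul (by positivity), ENNReal.ofReal_pow hc]
  norm_num [Real.Gamma_nat_eq_factorial]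

lemma volume_variation_le (hk : 0 < k) {c : ℝ} (hc : 0 ≤ c) :
    volume {v : Fin k → ℝ | variation v ≤ c}
      = ENNReal.ofReal (c ^ k * (2 ^ k / k.factorial)) := by
  have hdet : LinearMap.det (Matrix.toLin' (1 - shiftMat k)) = 1 := by
    rw [LinearMap.det_toLin', det_one_sub_shiftMat]
  have hpre : {v : Fin k → ℝ | variation v ≤ c}
      = Matrix.toLin' (1 - shiftMat k) ⁻¹' {w | ∑ i, |w i| ≤ c} := by
    ext v
    simp only [variation_eq_sum_abs_mulVec, Set.mem_ofPred_eq, Set.mem_preimage,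
      Matrix.toLin'_apply]
  rw [hpre, Measure.addHaar_preimage_linearMap _ (by rw [hdet]; exact one_ne_zero), hdet,
    volume_sum_abs_le hk hc]
  simp

end Volume

section Uniform

variable {α : Type*} [MeasurableSpace α] {μ : Measure α} {R : Set α}

lemma map_tuple_eq_pi_cond {Ω ι ι' : Type*} [MeasurableSpace Ω] [Fintype ι'] {P : Measure Ω}
    [IsProbabilityMeasure P] (h0 : μ R ≠ 0) (hT : μ R ≠ ∞) {Y : ι → Ω → α}
    (hind : iIndepFun Y P) (hunif : ∀ i, pdf.IsUniform (Y i) R P μ) {f : ι' → ι}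
    (hf : Function.Injective f) :
    P.map (fun ω i => Y (f i) ω) = Measure.pi fun _ : ι' => μ[|R] := by
  have := cond_isProbabilityMeasure_of_finite h0 hT
  rw [(iIndepFun_iff_map_fun_eq_pi_map fun i => (hunif (f i)).aemeasurable h0 hT).1
    (hind.precomp hf)]
  exact congrArg Measure.pi (funext fun i => hunif (f i))

lemma pi_cond_apply {ι : Type*} [Fintype ι] [SigmaFinite μ] (hR : MeasurableSet R)
    (S : Set (ι → α)) :
    Measure.pi (fun _ : ι => μ[|R]) S
      = (μ R)⁻¹ ^ Fintype.card ι *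
          Measure.pi (fun _ => μ) (S ∩ Set.univ.pi fun _ => R) := by
  have hpi : Measure.pi (fun _ : ι => μ[|R])
      = (μ R)⁻¹ ^ Fintype.card ι • Measure.pi (fun _ => μ.restrict R) := by
    refine Measure.pi_eq fun s hs => ?_
    simp only [Measure.smul_apply, Measure.pi_pi, smul_eq_mul, ProbabilityTheory.cond,
      Finset.prod_mul_distrib, Finset.prod_const, Finset.card_univ]
  rw [hpi, ← Measure.restrict_pi_pi, Measure.smul_apply, smul_eq_mul,
    Measure.restrict_apply' (MeasurableSet.univ_pi fun _ => hR)]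

end Uniform

lemma volume_Icc_prod_Icc {t x : ℝ} (ht : 0 ≤ t) :
    volume (Set.Icc 0 t ×ˢ Set.Icc (-x) x) = ENNReal.ofReal (t * (2 * x)) := by
  rw [Measure.volume_eq_prod, Measure.prod_prod, Real.volume_Icc, Real.volume_Icc,
    ← ENNReal.ofReal_mul (by linarith)]
  ring_nf

lemma volume_preimage_arrowProdEquivProdArrow {ι : Type*} [Fintype ι] {S T : Set (ι → ℝ)}
    (hS : MeasurableSet S) (hT : MeasurableSet T) :
    volume (MeasurableEquiv.arrowProdEquivProdArrow ℝ ℝ ι ⁻¹' (S ×ˢ T))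
      = volume S * volume T := by
  rw [(volume_measurePreserving_arrowProdEquivProdArrow ℝ ℝ ι).measure_preimage
    (hS.prod hT).nullMeasurableSet, Measure.volume_eq_prod, Measure.prod_prod]

lemma injective_of_mem_admissibleSeqs {B : ℝ} {m k : ℕ} {pts : Fin m → ℝ × ℝ}
    {f : Fin k → Fin m} (h : (fun i => pts (f i)) ∈ admissibleSeqs k B) :
    Function.Injective f :=
  Function.Injective.of_comp (f := fun j => (pts j).1) h.2.1.injective

lemma admissibleSeqs_inter_pi_subset {k : ℕ} (hk : 0 < k) {t x B : ℝ} (hB : 0 ≤ B) :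
    admissibleSeqs k B ∩ Set.univ.pi (fun _ => Set.Icc 0 t ×ˢ Set.Icc (-x) x)
      ⊆ MeasurableEquiv.arrowProdEquivProdArrow ℝ ℝ (Fin k) ⁻¹'
        ({u | variation u ≤ t} ×ˢ {v | variation v ≤ √(2 * B * t)}) := by
  rintro p ⟨⟨hpos, hmono, hent⟩, hpR⟩
  have htime : variation (fun i => (p i).1) ≤ t :=
    variation_le_of_strictMono hk hpos hmono fun i => (hpR i trivial).1.2
  refine ⟨htime, (le_abs_self _).trans (Real.abs_le_sqrt ?_)⟩
  calc variation (fun i => (p i).2) ^ 2 ≤ 2 * entSeq p * variation (fun i => (p i).1) :=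
        sq_variation_snd_le hpos hmono
    _ ≤ 2 * B * t := mul_le_mul (by linarith) htime (variation_nonneg _) (by positivity)

lemma measure_tuple_admissible_le {Ω : Type*} [MeasureSpace Ω]
    [IsProbabilityMeasure (ℙ : Measure Ω)] {t x B : ℝ} (ht : 0 < t) (hx : 0 < x) (hB : 0 ≤ B)
    {m k : ℕ} (hk : 0 < k) {Y : Fin m → Ω → ℝ × ℝ} (hind : iIndepFun Y ℙ)
    (hunif : ∀ i, pdf.IsUniform (Y i) (Set.Icc 0 t ×ˢ Set.Icc (-x) x) ℙ)
    (f : Fin k → Fin m) :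
    ℙ {ω | (fun i => Y (f i) ω) ∈ admissibleSeqs k B}
      ≤ ENNReal.ofReal ((2 * √(2 * B * t) / x) ^ k / k.factorial ^ 2) := by
  by_cases hf : Function.Injective f
  swap
  · have hempty : {ω | (fun i => Y (f i) ω) ∈ admissibleSeqs k B} = ∅ :=
      Set.eq_empty_of_forall_notMem fun ω hω =>
        hf (injective_of_mem_admissibleSeqs (pts := fun j => Y j ω) hω)
    simp [hempty]
  set R := Set.Icc 0 t ×ˢ Set.Icc (-x) x
  set r := √(2 * B * t)
  have hRvol : volume R = ENNReal.ofReal (t * (2 * x)) := volume_Icc_prod_Icc ht.le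
  have hR0 : volume R ≠ 0 := by rw [hRvol]; exact (ENNReal.ofReal_pos.2 (by positivity)).ne'
  have hRT : volume R ≠ ∞ := by rw [hRvol]; exact ENNReal.ofReal_ne_top
  calc ℙ {ω | (fun i => Y (f i) ω) ∈ admissibleSeqs k B}
      ≤ (ℙ : Measure Ω).map (fun ω i => Y (f i) ω) (admissibleSeqs k B) :=
        Measure.le_map_apply
          (aemeasurable_pi_lambda _ fun i => (hunif (f i)).aemeasurable hR0 hRT) _
    _ = (volume R)⁻¹ ^ k * volume (admissibleSeqs k B ∩ Set.univ.pi (fun _ => R)) := by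
        rw [map_tuple_eq_pi_cond hR0 hRT hind hunif hf,
          pi_cond_apply (measurableSet_Icc.prod measurableSet_Icc), Fintype.card_fin, volume_pi]
    _ ≤ (volume R)⁻¹ ^ k * (volume {u : Fin k → ℝ | variation u ≤ t} *
          volume {v : Fin k → ℝ | variation v ≤ r}) := by
        rw [← volume_preimage_arrowProdEquivProdArrow (measurableSet_variation_le t)
          (measurableSet_variation_le r)]
        gcongr
        exact admissibleSeqs_inter_pi_subset hk hB
    _ = _ := by
        have hr : 0 ≤ r := Real.sqrt_nonneg _
        rw [volume_variation_le hk ht.le, volume_variation_le hk hr, hRvol,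
          ← ENNReal.ofReal_mul (by positivity), ← ENNReal.ofReal_inv_of_pos (by positivity),
          ← ENNReal.ofReal_pow (by positivity), ← ENNReal.ofReal_mul (by positivity)]
        congr 1
        rw [inv_pow, mul_pow, div_pow, mul_pow 2 r]
        field_simp
        ring

lemma inv_factorial_le_exp_div_pow {k : ℕ} (hk : 0 < k) :
    1 / (k.factorial : ℝ) ≤ (exp 1 / k) ^ k := by
  have hk' : (0 : ℝ) < k := Nat.cast_pos.2 hk
  calc 1 / (k.factorial : ℝ) = ((k : ℝ) ^ k / k.factorial) / (k : ℝ) ^ k := by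
        field_simp
    _ ≤ exp k / (k : ℝ) ^ k := by
        gcongr
        exact pow_div_factorial_le_exp _ k.cast_nonneg k
    _ = (exp 1 / k) ^ k := by rw [div_pow, exp_one_pow]

lemma pow_mul_pow_div_factorial_sq_le {a : ℝ} (ha : 0 ≤ a) (m : ℕ) {k : ℕ} (hk : 0 < k) :
    (m : ℝ) ^ k * (a ^ k / k.factorial ^ 2) ≤ (exp 1 ^ 2 * a * m / k ^ 2) ^ k :=
  calc (m : ℝ) ^ k * (a ^ k / k.factorial ^ 2) = (a * m) ^ k * (1 / k.factorial) ^ 2 := by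
        ring
    _ ≤ (a * m) ^ k * ((exp 1 / k) ^ k) ^ 2 := by
        gcongr
        exact inv_factorial_le_exp_div_pow hk
    _ = (exp 1 ^ 2 * a * m / k ^ 2) ^ k := by ring

theorem stmt3 :
    ∃ C₀ : ℝ, 0 < C₀ ∧
      ∀ (Ω : Type) (_ : MeasureSpace Ω), IsProbabilityMeasure (ℙ : Measure Ω) →
        ∀ (t x B : ℝ), 0 < t → 0 < x → 0 < B →
          ∀ (m : ℕ), 1 ≤ m → ∀ (Y : Fin m → Ω → ℝ × ℝ),
            iIndepFun Y ℙ →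
            (∀ i, pdf.IsUniform (Y i) (Set.Icc 0 t ×ˢ Set.Icc (-x) x) ℙ) →
            ∀ (k : ℕ), 1 ≤ k → k ≤ m →
              ℙ {ω | k ≤ elppC B (fun i => Y i ω)}
                ≤ ENNReal.ofReal
                    ((C₀ * (B * t / x ^ 2) ^ ((1 : ℝ) / 2) * m / k ^ 2) ^ k) := by
  refine ⟨2 * √2 * exp 1 ^ 2, by positivity, ?_⟩
  intro Ω _ _ t x B ht hx hB m _ Y hind hunif k hk _
  have ha : 2 * √(2 * B * t) / x = 2 * √2 * (B * t / x ^ 2) ^ ((1 : ℝ) / 2) := by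
    rw [← Real.sqrt_eq_rpow, Real.sqrt_div' _ (by positivity), Real.sqrt_sq hx.le, mul_assoc 2 B,
      Real.sqrt_mul zero_le_two]
    ring
  calc ℙ {ω | k ≤ elppC B (fun i => Y i ω)}
      ≤ ℙ (⋃ f : Fin k → Fin m, {ω | (fun i => Y (f i) ω) ∈ admissibleSeqs k B}) :=
        measure_mono fun ω hω => Set.mem_iUnion.2 (exists_admissible_of_le_elppC hk _ hω)
    _ ≤ ∑ f : Fin k → Fin m, ℙ {ω | (fun i => Y (f i) ω) ∈ admissibleSeqs k B} :=
        measure_iUnion_fintype_le _ _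
    _ ≤ ∑ _f : Fin k → Fin m,
          ENNReal.ofReal ((2 * √(2 * B * t) / x) ^ k / k.factorial ^ 2) :=
        Finset.sum_le_sum fun f _ => measure_tuple_admissible_le ht hx hB.le hk hind hunif f
    _ = ENNReal.ofReal ((m : ℝ) ^ k * ((2 * √(2 * B * t) / x) ^ k / k.factorial ^ 2)) := by
        rw [ENNReal.ofReal_mul (by positivity), ENNReal.ofReal_pow m.cast_nonneg,
          ENNReal.ofReal_natCast]
        simp
    _ ≤ _ := by
        apply ENNReal.ofReal_le_ofReal
        convert pow_mul_pow_div_factorial_sq_le (a := 2 * √(2 * B * t) / x) (by positivity) m hk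
          using 3
        rw [ha]
        ring
end
end
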